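/- arXiv:2303.12851 — 4 statements merged into one kernel-verified Lean document; each statement's English description precedes it below -/
import Mathlib

section
/- Let D be a database and Σ a set of TGDs (with non-empty frontiers). If Σ is D-weakly-acyclic, then the semi-oblivious chase instance chase(D,Σ) is finite. -/
/-! ## A framework for existential rules (TGDs)and the semi-oblivious chase

Constants and variables are both modelled by `ℕ` (two disjoint countably
infinite sets, used in disjoint roles), labeled nulls are modelled by the
inductive type `GTerm.null`.  Atoms carry a predicate symbol from an
arbitrary type `P` and a list of arguments; positions of a predicate are
pairs `(R, i)` with a 0-based index `i`. -/

/-- An atom: a predicate symbol from `P` applied to a list of arguments from `τ`.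
For facts/databases the arguments are constants (`ℕ`); in TGDs they are
variables (`ℕ`); in instances they are ground terms. -/
structure Atom (P : Type) (τ : Type) where
  pred : P
  args : List τ

/-- Apply a substitution to the arguments of an atom. -/
def Atom.map {P τ τ' : Type} (f : τ → τ') (a : Atom P τ) : Atom P τ' :=
  ⟨a.pred, a.args.map f⟩

/-- A TGD `∀x̄∀ȳ (φ(x̄,ȳ) → ∃z̄ ψ(x̄,z̄))`: constant-free, with variables drawn
from `ℕ` and non-empty body and head (conjunctions of atoms as lists). -/
structure TGD (P : Type) where
  body : List (Atom P ℕ)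
  head : List (Atom P ℕ)
  body_ne : body ≠ []
  head_ne : head ≠ []

/-- The set of variables occurring in a list of atoms. -/
def varsOf {P : Type} (A : List (Atom P ℕ)) : Set ℕ := {v | ∃ a ∈ A, v ∈ a.args}

/-- The frontier of a TGD: the variables occurring both in body and head. -/
def TGD.frontier {P : Type} (σ : TGD P) : Set ℕ := varsOf σ.body ∩ varsOf σ.head

/-- The existentially quantified variables of a TGD: head variables not in the body. -/
def TGD.existVars {P : Type} (σ : TGD P) : Set ℕ := varsOf σ.head \ varsOf σ.body

/-- A TGD is linear if its body consists of a single atom. -/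
def TGD.Linear {P : Type} (σ : TGD P) : Prop := ∃ a : Atom P ℕ, σ.body = [a]

/-- A linear TGD is simple-linear if moreover no variable occurs more than once
in its body atom. -/
def TGD.SimpleLinear {P : Type} (σ : TGD P) : Prop :=
  ∃ a : Atom P ℕ, σ.body = [a] ∧ a.args.Nodup

/-- Ground terms: constants from `ℕ`, or labeled nulls `⊥^x_{σ,g}` uniquely
determined by a TGD `σ`, a (frontier) assignment `g`, and a variable `x`. -/
inductive GTerm (P : Type) : Type
  | const : ℕ → GTerm P
  | null : TGD P → (ℕ → GTerm P) → ℕ → GTerm P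

/-- `h` is a homomorphism from the (constant-free) atoms `A` into the set of
atoms `I` (being a substitution on variables, it is the identity on constants). -/
def IsHom {P τ τ' : Type} (h : τ → τ') (A : List (Atom P τ)) (I : Set (Atom P τ')) : Prop :=
  ∀ a ∈ A, a.map h ∈ I

open Classical in
/-- The restriction `h|fr(σ)` of `h` to the frontier of `σ`
(a fixed default value elsewhere). -/
noncomputable def frRestrict {P : Type} (σ : TGD P) (h : ℕ → GTerm P) : ℕ → GTerm P :=
  fun v => if v ∈ σ.frontier then h v else GTerm.const 0

open Classical in
/-- The substitution `μ` of a trigger `(σ,h)`: it agrees with `h` on the frontier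
variables and sends each other (existentially quantified) variable `x` to the
labeled null `⊥^x_{σ,h|fr(σ)}`. -/
noncomputable def triggerSubst {P : Type} (σ : TGD P) (h : ℕ → GTerm P) : ℕ → GTerm P :=
  fun x => if x ∈ σ.frontier then h x else GTerm.null σ (frRestrict σ h) x

/-- The result of a trigger: `result(σ,h) = μ(head(σ))`. -/
noncomputable def triggerResult {P : Type} (σ : TGD P) (h : ℕ → GTerm P) :
    Set (Atom P (GTerm P)) :=
  {ga | ∃ a ∈ σ.head, ga = a.map (triggerSubst σ h)}

/-- A database viewed as an instance (constants as ground terms). -/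
def dbInst {P : Type} (D : Set (Atom P ℕ)) : Set (Atom P (GTerm P)) :=
  {ga | ∃ a ∈ D, ga = a.map GTerm.const}

/-- `chase^i(D,Σ)`: the `i`-th level of the semi-oblivious chase. -/
noncomputable def chaseN {P : Type} (D : Set (Atom P ℕ)) (Sgm : Set (TGD P)) :
    ℕ → Set (Atom P (GTerm P))
  | 0 => dbInst D
  | i + 1 => chaseN D Sgm i ∪
      {ga | ∃ σ ∈ Sgm, ∃ h : ℕ → GTerm P,
        IsHom h σ.body (chaseN D Sgm i) ∧ ga ∈ triggerResult σ h}

/-- The semi-oblivious chase: `chase(D,Σ) = ⋃ i, chase^i(D,Σ)`. -/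
noncomputable def chase {P : Type} (D : Set (Atom P ℕ)) (Sgm : Set (TGD P)) :
    Set (Atom P (GTerm P)) := ⋃ i, chaseN D Sgm i

/-- An instance `I` satisfies a TGD `σ`: every homomorphism from the body into `I`
extends (on the frontier) to a homomorphism from the head into `I`. -/
def SatisfiesTGD {P : Type} (I : Set (Atom P (GTerm P))) (σ : TGD P) : Prop :=
  ∀ h : ℕ → GTerm P, IsHom h σ.body I →
    ∃ h' : ℕ → GTerm P, (∀ x ∈ σ.frontier, h' x = h x) ∧ IsHom h' σ.head I

/-- Variable `x` occurs at position `π = (R,i)` in the body of `σ`. -/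
def bodyPosOf {P : Type} (σ : TGD P) (x : ℕ) (π : P × ℕ) : Prop :=
  ∃ a ∈ σ.body, a.pred = π.1 ∧ a.args[π.2]? = some x

/-- Variable `x` occurs at position `π = (R,i)` in the head of `σ`. -/
def headPosOf {P : Type} (σ : TGD P) (x : ℕ) (π : P × ℕ) : Prop :=
  ∃ a ∈ σ.head, a.pred = π.1 ∧ a.args[π.2]? = some x

/-- The normal edges of the dependency graph `dg(Σ)`: from a body position of a
frontier variable `x` of some `σ ∈ Σ` to a head position of `x`. -/
def normalEdge {P : Type} (Sgm : Set (TGD P)) (π π' : P × ℕ) : Prop :=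
  ∃ σ ∈ Sgm, ∃ x ∈ σ.frontier, bodyPosOf σ x π ∧ headPosOf σ x π'

/-- The special edges of `dg(Σ)`: from a body position of a frontier variable of
some `σ ∈ Σ` to a head position of an existentially quantified variable of `σ`. -/
def specialEdge {P : Type} (Sgm : Set (TGD P)) (π π' : P × ℕ) : Prop :=
  ∃ σ ∈ Sgm, (∃ x ∈ σ.frontier, bodyPosOf σ x π) ∧ ∃ z ∈ σ.existVars, headPosOf σ z π'

/-- An edge of `dg(Σ)`: normal or special. -/
def depEdge {P : Type} (Sgm : Set (TGD P)) (π π' : P × ℕ) : Prop :=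
  normalEdge Sgm π π' ∨ specialEdge Sgm π π'

/-- Predicate `Q` is reachable from predicate `R` w.r.t. `Σ`: either `R = Q` or
there is a path in `dg(Σ)` from a position of `R` to a position of `Q`. -/
def reachPred {P : Type} (Sgm : Set (TGD P)) (R Q : P) : Prop :=
  R = Q ∨ ∃ i j : ℕ, Relation.ReflTransGen (depEdge Sgm) (R, i) (Q, j)

/-- `l` is a (not necessarily simple) cycle, i.e. a closed walk, in `dg(Σ)`
containing a special edge. -/
def IsCycleWithSpecial {P : Type} (Sgm : Set (TGD P)) (l : List (P × ℕ)) : Prop :=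
  2 ≤ l.length ∧ List.Chain' (depEdge Sgm) l ∧ l.head? = l.getLast? ∧
    ∃ k : ℕ, ∃ π π' : P × ℕ, l[k]? = some π ∧ l[k + 1]? = some π' ∧ specialEdge Sgm π π'

/-- The path `l` in `dg(Σ)` is `D`-supported: some atom `R(t̄) ∈ D` and some node
`(P,i)` on `l` are such that `P` is reachable from `R` w.r.t. `Σ`. -/
def SupportedBy {P : Type} (Sgm : Set (TGD P)) (D : Set (Atom P ℕ))
    (l : List (P × ℕ)) : Prop :=
  ∃ a ∈ D, ∃ π ∈ l, reachPred Sgm a.pred π.1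

/-- `Σ` is `D`-weakly-acyclic: no `D`-supported cycle in `dg(Σ)` has a special edge. -/
def DWeaklyAcyclic {P : Type} (D : Set (Atom P ℕ)) (Sgm : Set (TGD P)) : Prop :=
  ¬ ∃ l : List (P × ℕ), IsCycleWithSpecial Sgm l ∧ SupportedBy Sgm D l

/-- `Σ` is weakly-acyclic: no cycle in `dg(Σ)` has a special edge. -/
def WeaklyAcyclic {P : Type} (Sgm : Set (TGD P)) : Prop :=
  ¬ ∃ l : List (P × ℕ), IsCycleWithSpecial Sgm l


/-! ### Auxiliary machinery for the proof -/

section AuxProof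

variable {P : Type}

/-- Positions that are the source of some potential edge (a body position). -/
def SrcPos (Sgm : Set (TGD P)) : Set (P × ℕ) := {π | ∃ σ ∈ Sgm, ∃ x, bodyPosOf σ x π}

/-- A position reachable (with explicit start index) from the predicate of a database atom. -/
def GoodAt (Sgm : Set (TGD P)) (D : Set (Atom P ℕ)) (π : P × ℕ) : Prop :=
  ∃ a ∈ D, a.pred = π.1 ∨ ∃ i, Relation.ReflTransGen (depEdge Sgm) (a.pred, i) π

/-- Reachability through at least one special edge. -/
def SR (Sgm : Set (TGD P)) (π π' : P × ℕ) : Prop :=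
  ∃ πa πb, Relation.ReflTransGen (depEdge Sgm) π πa ∧ specialEdge Sgm πa πb ∧
    Relation.ReflTransGen (depEdge Sgm) πb π'

lemma goodAt_of_edge {Sgm : Set (TGD P)} {D : Set (Atom P ℕ)} {πb π : P × ℕ}
    (h : GoodAt Sgm D πb) (e : depEdge Sgm πb π) : GoodAt Sgm D π := by
  obtain ⟨a, ha, h⟩ := h
  rcases h with heq | ⟨i, hp⟩
  · refine ⟨a, ha, Or.inr ⟨πb.2, ?_⟩⟩
    rw [heq, Prod.mk.eta]
    exact Relation.ReflTransGen.single e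
  · exact ⟨a, ha, Or.inr ⟨i, hp.tail e⟩⟩

lemma goodAt_reach {Sgm : Set (TGD P)} {D : Set (Atom P ℕ)} {π : P × ℕ}
    (h : GoodAt Sgm D π) : ∃ a ∈ D, reachPred Sgm a.pred π.1 := by
  obtain ⟨a, ha, h⟩ := h
  rcases h with heq | ⟨i, hp⟩
  · exact ⟨a, ha, Or.inl heq⟩
  · exact ⟨a, ha, Or.inr ⟨i, π.2, by rwa [Prod.mk.eta]⟩⟩

lemma sr_tail {Sgm : Set (TGD P)} {π π' π'' : P × ℕ}
    (h : SR Sgm π π') (e : depEdge Sgm π' π'') : SR Sgm π π'' := by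
  obtain ⟨πa, πb, h1, hs, h2⟩ := h
  exact ⟨πa, πb, h1, hs, h2.tail e⟩

lemma getElem?_lt {α : Type*} {l : List α} {n : ℕ} {a : α} (h : l[n]? = some a) :
    n < l.length := by
  by_contra hn
  push_neg at hn
  rw [List.getElem?_eq_none hn] at h
  cases h

lemma sr_irrefl {Sgm : Set (TGD P)} {D : Set (Atom P ℕ)} {π : P × ℕ}
    (hwa : DWeaklyAcyclic D Sgm) (hg : GoodAt Sgm D π) : ¬ SR Sgm π π := by
  rintro ⟨πa, πb, h1, hsp, h2⟩
  obtain ⟨l1, hc1, hl1⟩ := List.exists_isChain_cons_of_relationReflTransGen h1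
  obtain ⟨l2, hc2, hl2⟩ := List.exists_isChain_cons_of_relationReflTransGen h2
  apply hwa
  have hA1 : (π :: l1).getLast? = some πa := by
    rw [List.getLast?_eq_getLast (List.cons_ne_nil _ _), hl1]
  have hA2 : (πb :: l2).getLast? = some π := by
    rw [List.getLast?_eq_getLast (List.cons_ne_nil _ _), hl2]
  refine ⟨(π :: l1) ++ (πb :: l2), ⟨?_, ?_, ?_, l1.length, πa, πb, ?_, ?_, hsp⟩, ?_⟩
  · simp; omega
  · rw [List.Chain', List.isChain_append]
    refine ⟨hc1, hc2, ?_⟩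
    intro x hx y hy
    rw [hA1] at hx
    simp at hx hy
    rw [← hx, ← hy]
    exact Or.inr hsp
  · have hH : ((π :: l1) ++ (πb :: l2)).head? = some π := by simp
    have hL : ((π :: l1) ++ (πb :: l2)).getLast? = some π := by
      rw [List.getLast?_append, hA2]
      rfl
    rw [hH, hL]
  · rw [List.getElem?_append_left (by simp)]
    have : (π :: l1)[l1.length]? = (π :: l1).getLast? := by
      rw [List.getLast?_eq_getElem?]
      simp
    rw [this, hA1]
  · rw [List.getElem?_append_right (by simp)]
    simp
  · obtain ⟨a, ha, hr⟩ := goodAt_reach hg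
    exact ⟨a, ha, π, by simp, hr⟩

lemma sr_src {Sgm : Set (TGD P)} {π π' : P × ℕ} (h : SR Sgm π π') : π ∈ SrcPos Sgm := by
  obtain ⟨πa, πb, h1, hs, _⟩ := h
  rcases h1.cases_head with rfl | ⟨c, e, _⟩
  · obtain ⟨σ, hσ, ⟨x, _, hb⟩, _⟩ := hs
    exact ⟨σ, hσ, x, hb⟩
  · rcases e with ⟨σ, hσ, x, _, hb, _⟩ | ⟨σ, hσ, ⟨x, _, hb⟩, _⟩
    · exact ⟨σ, hσ, x, hb⟩
    · exact ⟨σ, hσ, x, hb⟩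

lemma srcPos_finite {Sgm : Set (TGD P)} (hSgm : Sgm.Finite) : (SrcPos Sgm).Finite := by
  apply Set.Finite.subset (hSgm.biUnion (fun σ _ =>
    (σ.body.finite_toSet.biUnion (fun a _ =>
      ((Set.finite_singleton a.pred).prod (Set.finite_Iio a.args.length))))))
  rintro ⟨p, i⟩ ⟨σ, hσ, x, a, haB, hpred, hidx⟩
  refine Set.mem_biUnion hσ (Set.mem_biUnion haB ?_)
  exact ⟨hpred.symm, getElem?_lt hidx⟩

/-- The set counted by the rank of a position. -/
def rankSet (Sgm : Set (TGD P)) (D : Set (Atom P ℕ)) (π : P × ℕ) : Set (P × ℕ) :=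
  {π' | SR Sgm π' π ∧ GoodAt Sgm D π'}

lemma rankSet_sub {Sgm : Set (TGD P)} {D : Set (Atom P ℕ)} {π : P × ℕ} :
    rankSet Sgm D π ⊆ SrcPos Sgm := fun _ h => sr_src h.1

lemma rankSet_finite {Sgm : Set (TGD P)} {D : Set (Atom P ℕ)} (hSgm : Sgm.Finite)
    (π : P × ℕ) : (rankSet Sgm D π).Finite :=
  (srcPos_finite hSgm).subset rankSet_sub

/-- The rank of a position. -/
noncomputable def rank (Sgm : Set (TGD P)) (D : Set (Atom P ℕ)) (π : P × ℕ) : ℕ :=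
  (rankSet Sgm D π).ncard

lemma rank_le_of_edge {Sgm : Set (TGD P)} {D : Set (Atom P ℕ)} (hSgm : Sgm.Finite)
    {πb π : P × ℕ} (e : depEdge Sgm πb π) : rank Sgm D πb ≤ rank Sgm D π :=
  Set.ncard_le_ncard (fun _ h => ⟨sr_tail h.1 e, h.2⟩) (rankSet_finite hSgm π)

lemma rank_lt_of_special {Sgm : Set (TGD P)} {D : Set (Atom P ℕ)} (hSgm : Sgm.Finite)
    (hwa : DWeaklyAcyclic D Sgm) {πb π : P × ℕ} (hg : GoodAt Sgm D πb)
    (e : specialEdge Sgm πb π) : rank Sgm D πb < rank Sgm D π := by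
  have hmem : πb ∈ rankSet Sgm D π :=
    ⟨⟨πb, π, Relation.ReflTransGen.refl, e, Relation.ReflTransGen.refl⟩, hg⟩
  have hnm : πb ∉ rankSet Sgm D πb := fun h => sr_irrefl hwa hg h.1
  calc rank Sgm D πb < (insert πb (rankSet Sgm D πb)).ncard := by
        rw [rank, Set.ncard_insert_of_notMem hnm (rankSet_finite hSgm πb)]; omega
    _ ≤ rank Sgm D π := by
        apply Set.ncard_le_ncard _ (rankSet_finite hSgm π)
        rw [Set.insert_subset_iff]
        exact ⟨hmem, fun π' h => ⟨sr_tail h.1 (Or.inr e), h.2⟩⟩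

lemma rank_le_src {Sgm : Set (TGD P)} {D : Set (Atom P ℕ)} (hSgm : Sgm.Finite)
    (π : P × ℕ) : rank Sgm D π ≤ (SrcPos Sgm).ncard :=
  Set.ncard_le_ncard rankSet_sub (srcPos_finite hSgm)

/-- Tiers of ground terms, stratified by rank. -/
def Tier (Sgm : Set (TGD P)) (D : Set (Atom P ℕ)) : ℕ → Set (GTerm P)
  | 0 => {t | ∃ a ∈ D, ∃ c ∈ a.args, t = GTerm.const c}
  | (k+1) => Tier Sgm D k ∪ {t | ∃ σ ∈ Sgm, ∃ g : ℕ → GTerm P,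
      (∀ v ∈ σ.frontier, g v ∈ Tier Sgm D k) ∧ (∀ v ∉ σ.frontier, g v = GTerm.const 0) ∧
      ∃ x ∈ varsOf σ.head, t = GTerm.null σ g x}

lemma tier_mono {Sgm : Set (TGD P)} {D : Set (Atom P ℕ)} {k m : ℕ} (h : k ≤ m) :
    Tier Sgm D k ⊆ Tier Sgm D m := by
  induction h with
  | refl => exact subset_rfl
  | step _ ih => exact ih.trans Set.subset_union_left

lemma varsOf_finite (L : List (Atom P ℕ)) : (varsOf L).Finite := by
  have : varsOf L = ⋃ a ∈ {a | a ∈ L}, {v | v ∈ a.args} := by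
    ext v; simp [varsOf]
  rw [this]
  exact L.finite_toSet.biUnion fun a _ => a.args.finite_toSet

lemma frontier_finite (σ : TGD P) : σ.frontier.Finite :=
  (varsOf_finite σ.body).subset Set.inter_subset_left

lemma funset_finite {S : Set ℕ} {T : Set (GTerm P)} (hS : S.Finite) (hT : T.Finite) :
    {g : ℕ → GTerm P | (∀ v ∈ S, g v ∈ T) ∧ ∀ v ∉ S, g v = GTerm.const 0}.Finite := by
  haveI := hS.to_subtype
  apply Set.Finite.of_finite_image (f := fun g (v : S) => g v)
  · apply Set.Finite.subset (Set.Finite.pi (fun _ : S => hT))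
    rintro u ⟨g, hg, rfl⟩
    exact fun v _ => hg.1 v v.2
  · intro g1 h1 g2 h2 he
    funext v
    by_cases hv : v ∈ S
    · exact congrFun he ⟨v, hv⟩
    · rw [h1.2 v hv, h2.2 v hv]

lemma tier_finite {Sgm : Set (TGD P)} {D : Set (Atom P ℕ)} (hD : D.Finite)
    (hSgm : Sgm.Finite) : ∀ k, (Tier Sgm D k).Finite := by
  intro k
  induction k with
  | zero =>
    have : Tier Sgm D 0 = GTerm.const '' {c | ∃ a ∈ D, c ∈ a.args} := by
      ext t; simp [Tier]; tauto
    rw [this]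
    apply Set.Finite.image
    apply Set.Finite.subset (hD.biUnion (fun a _ => a.args.finite_toSet))
    rintro c ⟨a, ha, hc⟩
    exact Set.mem_biUnion ha hc
  | succ k ih =>
    apply Set.Finite.union ih
    apply Set.Finite.subset (hSgm.biUnion (fun σ _ =>
      (((funset_finite (frontier_finite σ) ih).prod (varsOf_finite σ.head)).image
        (fun p : (ℕ → GTerm P) × ℕ => GTerm.null σ p.1 p.2))))
    rintro t ⟨σ, hσ, g, hg1, hg2, x, hx, rfl⟩
    exact Set.mem_biUnion hσ ⟨(g, x), ⟨⟨hg1, hg2⟩, hx⟩, rfl⟩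

/-- Main invariant of the chase. -/
lemma chase_main {D : Set (Atom P ℕ)} {Sgm : Set (TGD P)}
    (hSgm : Sgm.Finite)
    (hfr : ∀ σ ∈ Sgm, σ.frontier.Nonempty)
    (hwa : DWeaklyAcyclic D Sgm) :
    ∀ n, ∀ A ∈ chaseN D Sgm n,
      ((∃ a ∈ D, a.pred = A.pred ∧ a.args.length = A.args.length) ∨
        (∃ σ ∈ Sgm, ∃ c ∈ σ.head, c.pred = A.pred ∧ c.args.length = A.args.length)) ∧
      (∀ j t, A.args[j]? = some t →
        GoodAt Sgm D (A.pred, j) ∧ t ∈ Tier Sgm D (rank Sgm D (A.pred, j))) := by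
  intro n
  induction n with
  | zero =>
    rintro A ⟨a, ha, rfl⟩
    constructor
    · exact Or.inl ⟨a, ha, rfl, by simp [Atom.map]⟩
    · intro j t ht
      have ht' : (a.args.map GTerm.const)[j]? = some t := ht
      rw [List.getElem?_map] at ht'
      obtain ⟨c, hc, rfl⟩ := Option.map_eq_some_iff.mp ht'
      refine ⟨⟨a, ha, Or.inl rfl⟩, ?_⟩
      apply tier_mono (Nat.zero_le _)
      exact ⟨a, ha, c, List.mem_iff_getElem?.mpr ⟨j, hc⟩, rfl⟩
  | succ n ih =>
    rintro A hA
    rcases hA with hA | ⟨σ, hσ, h, hhom, c, hc, rfl⟩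
    · exact ih A hA
    · refine ⟨Or.inr ⟨σ, hσ, c, hc, rfl, by simp [Atom.map]⟩, ?_⟩
      intro j t ht
      rw [show (Atom.map (triggerSubst σ h) c).pred = c.pred from rfl]
      have ht' : (c.args.map (triggerSubst σ h))[j]? = some t := ht
      rw [List.getElem?_map] at ht'
      obtain ⟨v, hv, rfl⟩ := Option.map_eq_some_iff.mp ht'
      have hvh : v ∈ varsOf σ.head := ⟨c, hc, List.mem_iff_getElem?.mpr ⟨j, hv⟩⟩
      have hHead : headPosOf σ v (c.pred, j) := ⟨c, hc, rfl, hv⟩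
      have bodyInfo : ∀ w ∈ varsOf σ.body, ∃ πb, bodyPosOf σ w πb ∧ GoodAt Sgm D πb ∧
          h w ∈ Tier Sgm D (rank Sgm D πb) := by
        rintro w ⟨ab, hab, hwab⟩
        obtain ⟨i, hi⟩ := List.mem_iff_getElem?.mp hwab
        refine ⟨(ab.pred, i), ⟨ab, hab, rfl, hi⟩, ?_⟩
        have hmem : ab.map h ∈ chaseN D Sgm n := hhom ab hab
        have hi' : (ab.map h).args[i]? = some (h w) := by
          show (ab.args.map h)[i]? = some (h w)
          rw [List.getElem?_map, hi]; rfl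
        exact (ih _ hmem).2 i (h w) hi'
      by_cases hvf : v ∈ σ.frontier
      · have hμ : triggerSubst σ h v = h v := if_pos hvf
        obtain ⟨πb, hbp, hgb, htb⟩ := bodyInfo v hvf.1
        have edge : depEdge Sgm πb (c.pred, j) := Or.inl ⟨σ, hσ, v, hvf, hbp, hHead⟩
        refine ⟨goodAt_of_edge hgb edge, ?_⟩
        rw [hμ]
        exact tier_mono (rank_le_of_edge hSgm edge) htb
      · have hμ : triggerSubst σ h v = GTerm.null σ (frRestrict σ h) v := if_neg hvf
        have hvex : v ∈ σ.existVars := ⟨hvh, fun hvb => hvf ⟨hvb, hvh⟩⟩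
        obtain ⟨x, hxf⟩ := hfr σ hσ
        obtain ⟨πb, hbp, hgb, _⟩ := bodyInfo x hxf.1
        have sedge : specialEdge Sgm πb (c.pred, j) := ⟨σ, hσ, ⟨x, hxf, hbp⟩, v, hvex, hHead⟩
        have hgood := goodAt_of_edge hgb (Or.inr sedge)
        have hlt := rank_lt_of_special hSgm hwa hgb sedge
        refine ⟨hgood, ?_⟩
        rw [hμ]
        have hr : rank Sgm D (c.pred, j) = (rank Sgm D (c.pred, j) - 1) + 1 := by omega
        rw [hr]
        refine Or.inr ⟨σ, hσ, frRestrict σ h, ?_, ?_, v, hvh, rfl⟩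
        · intro w hw
          obtain ⟨πw, hbpw, hgw, htw⟩ := bodyInfo w hw.1
          have sw : specialEdge Sgm πw (c.pred, j) := ⟨σ, hσ, ⟨w, hw, hbpw⟩, v, hvex, hHead⟩
          have hltw := rank_lt_of_special hSgm hwa hgw sw
          have : frRestrict σ h w = h w := if_pos hw
          rw [this]
          exact tier_mono (by omega) htw
        · intro w hw
          exact if_neg hw

end AuxProof

/-- Let `D` be a database and `Σ` a set of TGDs (with non-empty
frontiers). If `Σ` is `D`-weakly-acyclic, then the semi-oblivious chase instance
`chase(D,Σ)` is finite. -/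
theorem statement0 {P : Type} (D : Set (Atom P ℕ)) (Sgm : Set (TGD P))
    (hD : D.Finite) (hSgm : Sgm.Finite)
    (hfr : ∀ σ ∈ Sgm, σ.frontier.Nonempty)
    (hwa : DWeaklyAcyclic D Sgm) :
    (chase D Sgm).Finite := by
  classical
  -- bound on arities
  obtain ⟨N1, hN1⟩ := (hD.image (fun a => a.args.length)).bddAbove
  obtain ⟨N2, hN2⟩ := (hSgm.biUnion (fun σ _ =>
    ((σ.head.finite_toSet).image (fun c => c.args.length)))).bddAbove
  set N := max N1 N2 with hN
  set TT := Tier Sgm D ((SrcPos Sgm).ncard) with hTTdef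
  have hTT : TT.Finite := tier_finite hD hSgm _
  set Preds : Set P := (Atom.pred '' D) ∪ ⋃ σ ∈ Sgm, Atom.pred '' {c | c ∈ σ.head} with hPdef
  have hPreds : Preds.Finite :=
    (hD.image _).union (hSgm.biUnion fun σ _ => ((σ.head.finite_toSet).image _))
  set LS : Set (List (GTerm P)) := {l | l.length ≤ N ∧ ∀ t ∈ l, t ∈ TT} with hLSdef
  have hLS : LS.Finite := by
    haveI := hTT.to_subtype
    apply Set.Finite.subset ((List.finite_length_le (↥TT) N).image (List.map Subtype.val))
    rintro l ⟨hlen, hmem⟩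
    refine ⟨l.attach.map (fun x => (⟨x.1, hmem x.1 x.2⟩ : ↥TT)), by simpa using hlen, ?_⟩
    rw [List.map_map]
    simp [List.attach_map_val (l := l) (f := id)]
  apply Set.Finite.subset ((hPreds.prod hLS).image
    (fun q : P × List (GTerm P) => (⟨q.1, q.2⟩ : Atom P (GTerm P))))
  rintro A hA
  obtain ⟨n, hn⟩ := Set.mem_iUnion.mp hA
  obtain ⟨hpl, hargs⟩ := chase_main hSgm hfr hwa n A hn
  have hpred : A.pred ∈ Preds := by
    rcases hpl with ⟨a, ha, hp, _⟩ | ⟨σ, hσ, c, hc, hp, _⟩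
    · exact Or.inl ⟨a, ha, hp⟩
    · exact Or.inr (Set.mem_biUnion hσ ⟨c, hc, hp⟩)
  have hlen : A.args.length ≤ N := by
    rcases hpl with ⟨a, ha, _, hl⟩ | ⟨σ, hσ, c, hc, _, hl⟩
    · rw [← hl]
      exact le_trans (hN1 ⟨a, ha, rfl⟩) (le_max_left _ _)
    · rw [← hl]
      exact le_trans (hN2 (Set.mem_biUnion hσ ⟨c, hc, rfl⟩)) (le_max_right _ _)
  have hmem : ∀ t ∈ A.args, t ∈ TT := by
    intro t ht
    obtain ⟨j, hj⟩ := List.mem_iff_getElem?.mp ht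
    exact tier_mono (rank_le_src hSgm _) ((hargs j t hj).2)
  exact ⟨(A.pred, A.args), ⟨hpred, hlen, hmem⟩, rfl⟩
end

section
/- Let D be a database and Σ a set of linear TGDs (with non-empty frontiers) such that the atoms of D mention only predicates of sch(Σ). Then chase(simple(D), simple(Σ)) is finite if and only if chase(simple(D), simple_D(Σ)) is finite, where simple(D) is the simplification of D, simple(Σ) is the (static) simplification of Σ, and simple_D(Σ) is the dynamic simplification of Σ relative to D. -/
/-! ## Simplification of linear TGDs -/

/-- `id_{t̄}(x)`: the (1-based) position in `unique(t̄)` at which `x` appears,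
i.e. the rank of the first occurrence of `x` in `l`. -/
def idOf (l : List ℕ) (x : ℕ) : ℕ := ((l.take (l.idxOf x)).dedup).length + 1

/-- `id(t̄) = (id_{t̄}(t1), ..., id_{t̄}(tn))`. -/
def idTuple (l : List ℕ) : List ℕ := l.map (idOf l)

/-- `unique(t̄)`: keep only the first occurrence of each entry of `l`. -/
def uniqueList (l : List ℕ) : List ℕ := (l.reverse.dedup).reverse

/-- The simplification of an atom `α = R(t̄)`:
the atom `R_{id(t̄)}(unique(t̄))` over the shape predicates `P × List ℕ`. -/
def Atom.simple {P : Type} (a : Atom P ℕ) : Atom (P × List ℕ) ℕ :=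
  ⟨(a.pred, idTuple a.args), uniqueList a.args⟩

/-- The shape of an atom `α = R(t̄)`: the predicate `R_{id(t̄)}`. -/
def Atom.shape {P : Type} (a : Atom P ℕ) : P × List ℕ := (a.pred, idTuple a.args)

/-- `f` is a specialization of the tuple of variables `xs = (x1,...,xn)`:
`f(x1) = x1` and `f(xi) ∈ {f(x1),...,f(x_{i-1}), xi}`. -/
def IsSpecialization (xs : List ℕ) (f : ℕ → ℕ) : Prop :=
  ∀ i : ℕ, ∀ x : ℕ, xs[i]? = some x → f x ∈ (xs.take i).map f ++ [x]

/-- `f` is the `h`-specialization of `xs`: the specialization of `xs` with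
`f(xi) = f(xj)` iff `h(xi) = h(xj)`. -/
def IsHSpecialization (xs : List ℕ) (h : ℕ → ℕ) (f : ℕ → ℕ) : Prop :=
  IsSpecialization xs f ∧ ∀ x ∈ xs, ∀ y ∈ xs, (f x = f y ↔ h x = h y)

open Classical in
/-- The simplification of a linear TGD `σ` with body atom `a` induced by a
specialization `f`: the simple-linear TGD
`simple(R(f(x̄))) → ∃z̄ simple(ψ(f(ȳ),z̄))` (with `f` applied to the universally
quantified variables only). -/
noncomputable def TGD.simplifyBy {P : Type} (σ : TGD P) (a : Atom P ℕ) (f : ℕ → ℕ) :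
    TGD (P × List ℕ) where
  body := [(a.map f).simple]
  head := σ.head.map fun b =>
    (b.map fun v => if v ∈ varsOf σ.body then f v else v).simple
  body_ne := by simp
  head_ne := by simpa using σ.head_ne

/-- `simple(σ)`: all simplifications of a linear TGD `σ` induced by some
specialization of its body tuple. -/
noncomputable def simpleSet {P : Type} (σ : TGD P) : Set (TGD (P × List ℕ)) :=
  {τ | ∃ a f, σ.body = [a] ∧ IsSpecialization a.args f ∧ τ = σ.simplifyBy a f}

/-- The (static) simplification `simple(Σ) = ⋃_{σ ∈ Σ} simple(σ)`. -/
noncomputable def simplify {P : Type} (Sgm : Set (TGD P)) : Set (TGD (P × List ℕ)) :=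
  ⋃ σ ∈ Sgm, simpleSet σ

/-- The predicates of `sch(Σ)`, together with their arities. -/
def schPreds {P : Type} (Sgm : Set (TGD P)) : Set (P × ℕ) :=
  {Rn | ∃ σ ∈ Sgm, ∃ a : Atom P ℕ, (a ∈ σ.body ∨ a ∈ σ.head) ∧
    a.pred = Rn.1 ∧ a.args.length = Rn.2}

/-- `shape(Σ)`: all shapes `R_{id(t̄)}` with `R ∈ sch(Σ)` and `t̄` a tuple of the
arity of `R`. -/
def shapesOf {P : Type} (Sgm : Set (TGD P)) : Set (P × List ℕ) :=
  {s | ∃ Rn ∈ schPreds Sgm, ∃ t : List ℕ, t.length = Rn.2 ∧ s = (Rn.1, idTuple t)}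

/-- `DB[S]`: the database induced by a set of shapes,
`{R(id(t̄)) : R_{id(t̄)} ∈ S}`. -/
def DBof {P : Type} (S : Set (P × List ℕ)) : Set (Atom P ℕ) :=
  {a | (a.pred, a.args) ∈ S}

/-- The immediate consequences of a set of shapes `S` and `Σ`: the shapes of
`shape(Σ)` that are in `S`, or occur in the head of the simplification of some
`σ ∈ Σ` induced by the `h`-specialization of its body tuple, for some
homomorphism `h` from the body to `DB[S]`. -/
noncomputable def ImmCons {P : Type} (Sgm : Set (TGD P)) (S : Set (P × List ℕ)) :
    Set (P × List ℕ) :=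
  S ∪ {s | s ∈ shapesOf Sgm ∧ ∃ σ ∈ Sgm, ∃ (a : Atom P ℕ) (f h : ℕ → ℕ),
    σ.body = [a] ∧ IsHom h [a] (DBof S) ∧ IsHSpecialization a.args h f ∧
    ∃ b ∈ (σ.simplifyBy a f).head, b.pred = s}

/-- `Γ_Σ^i(S)`: iterates of the immediate consequence operator. -/
noncomputable def GammaIter {P : Type} (Sgm : Set (TGD P)) (S : Set (P × List ℕ)) :
    ℕ → Set (P × List ℕ)
  | 0 => S
  | i + 1 => ImmCons Sgm (GammaIter Sgm S i)

/-- `Σ(S) = ⋃_{i ≥ 0} Γ_Σ^i(S)`. -/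
noncomputable def SigmaClosure {P : Type} (Sgm : Set (TGD P)) (S : Set (P × List ℕ)) :
    Set (P × List ℕ) := ⋃ i, GammaIter Sgm S i

/-- The dynamic simplification `simple_D(Σ)`: the simplifications of TGDs of `Σ`
induced by `h`-specializations, for homomorphisms `h` from their bodies to
`DB[Σ(shape(D))]`. -/
noncomputable def dynSimplify {P : Type} (D : Set (Atom P ℕ)) (Sgm : Set (TGD P)) :
    Set (TGD (P × List ℕ)) :=
  {τ | ∃ σ ∈ Sgm, ∃ (a : Atom P ℕ) (f h : ℕ → ℕ), σ.body = [a] ∧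
    IsHom h [a] (DBof (SigmaClosure Sgm (Atom.shape '' D))) ∧
    IsHSpecialization a.args h f ∧ τ = σ.simplifyBy a f}

section Aux

lemma indexOf_le_getElem {l : List ℕ} {j : ℕ} (hj : j < l.length) :
    l.idxOf (l[j]'hj) ≤ j := by
  induction l generalizing j with
  | nil => simp at hj
  | cons a t ih =>
    cases j with
    | zero => simp
    | succ j =>
      by_cases h : a = t[j]'(by simpa using hj)
      · simp [List.getElem_cons_succ, ← h]
      · rw [List.getElem_cons_succ, List.idxOf_cons_ne _ h]
        exact Nat.succ_le_succ (ih _)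

lemma mem_take_of_indexOf_lt {l : List ℕ} {x : ℕ} {n : ℕ} (hx : x ∈ l)
    (h : l.idxOf x < n) : x ∈ l.take n := by
  have hlt : l.idxOf x < l.length := List.idxOf_lt_length_iff.2 hx
  have : (l.take n)[l.idxOf x]'(by simp [hlt, h]) = x := by
    rw [List.getElem_take]
    exact List.getElem_idxOf hlt
  exact this ▸ List.getElem_mem _

lemma not_mem_take_indexOf {l : List ℕ} {x : ℕ} : x ∉ l.take (l.idxOf x) := by
  intro hmem
  obtain ⟨j, hj, hjx⟩ := List.getElem_of_mem hmem
  have hj' : j < l.length := hj.trans_le (by simpa using List.length_take_le _ l)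
  have hlx : (l.take (l.idxOf x))[j]'hj = l[j]'hj' := List.getElem_take ..
  have hjlt : j < l.idxOf x := hj.trans_le (by simp)
  have hxeq : l[j]'hj' = x := by rw [← hlx, hjx]
  have : l.idxOf x ≤ j := hxeq ▸ indexOf_le_getElem hj'
  omega

lemma idOf_lt_of_indexOf_lt {l : List ℕ} {x y : ℕ} (hx : x ∈ l) (hy : y ∈ l)
    (h : l.idxOf x < l.idxOf y) : idOf l x < idOf l y := by
  unfold idOf
  have hsub : (l.take (l.idxOf x)).Sublist (l.take (l.idxOf y)) := by
    have : l.take (l.idxOf x) = (l.take (l.idxOf y)).take (l.idxOf x) := by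
      rw [List.take_take, min_eq_left h.le]
    rw [this]; exact List.take_sublist _ _
  have hsubset : (l.take (l.idxOf x)).toFinset ⊆ (l.take (l.idxOf y)).toFinset := by
    intro z hz
    simp only [List.mem_toFinset] at *
    exact hsub.subset hz
  have hxin : x ∈ (l.take (l.idxOf y)).toFinset := by
    simp only [List.mem_toFinset]
    exact mem_take_of_indexOf_lt hx h
  have hxout : x ∉ (l.take (l.idxOf x)).toFinset := by
    simp only [List.mem_toFinset]
    exact not_mem_take_indexOf
  have hss : (l.take (l.idxOf x)).toFinset ⊂ (l.take (l.idxOf y)).toFinset :=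
    ⟨hsubset, fun hc => hxout (hc hxin)⟩
  have := Finset.card_lt_card hss
  rw [List.card_toFinset, List.card_toFinset] at this
  omega

lemma idOf_inj_on {l : List ℕ} {x y : ℕ} (hx : x ∈ l) (hy : y ∈ l)
    (h : idOf l x = idOf l y) : x = y := by
  by_contra hne
  have hio : l.idxOf x ≠ l.idxOf y := fun hc => hne ((List.idxOf_inj hx).1 hc)
  rcases lt_or_gt_of_ne hio with hlt | hgt
  · exact absurd h (Nat.ne_of_lt (idOf_lt_of_indexOf_lt hx hy hlt))
  · exact absurd h.symm (Nat.ne_of_lt (idOf_lt_of_indexOf_lt hy hx hgt))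

end Aux
section Main

variable {P : Type}

lemma map_idOf_comp (a : Atom P ℕ) (f : ℕ → ℕ) :
    a.args.map (fun v => idOf (a.args.map f) (f v)) = idTuple (a.args.map f) := by
  rw [idTuple, List.map_map]; rfl

lemma isHSpec_idOf (a : Atom P ℕ) (f : ℕ → ℕ) (hf : IsSpecialization a.args f) :
    IsHSpecialization a.args (fun v => idOf (a.args.map f) (f v)) f := by
  refine ⟨hf, fun x hx y hy => ⟨fun he => by simp [he], fun he => ?_⟩⟩
  exact idOf_inj_on (List.mem_map_of_mem (f := f) hx) (List.mem_map_of_mem (f := f) hy) he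

lemma isHom_idOf_db (a : Atom P ℕ) (f : ℕ → ℕ) {S : Set (P × List ℕ)}
    (hS : (a.pred, idTuple (a.args.map f)) ∈ S) :
    IsHom (fun v => idOf (a.args.map f) (f v)) [a] (DBof S) := by
  intro b hb
  simp only [List.mem_singleton] at hb
  subst hb
  show ((b.map _).pred, (b.map _).args) ∈ S
  simpa [Atom.map, map_idOf_comp] using hS

lemma simplify_mem_dyn (D : Set (Atom P ℕ)) (Sgm : Set (TGD P)) {σ : TGD P}
    (hσ : σ ∈ Sgm) {a : Atom P ℕ} {f : ℕ → ℕ} (hbody : σ.body = [a])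
    (hf : IsSpecialization a.args f)
    (hcl : (a.pred, idTuple (a.args.map f)) ∈ SigmaClosure Sgm (Atom.shape '' D)) :
    σ.simplifyBy a f ∈ dynSimplify D Sgm :=
  ⟨σ, hσ, a, f, fun v => idOf (a.args.map f) (f v), hbody,
    isHom_idOf_db a f hcl, isHSpec_idOf a f hf, rfl⟩

lemma chase_pred_mem_closure (D : Set (Atom P ℕ)) (Sgm : Set (TGD P)) :
    ∀ i, ∀ ga ∈ chaseN (Atom.simple '' D) (simplify Sgm) i,
      ga.pred ∈ SigmaClosure Sgm (Atom.shape '' D) := by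
  intro i
  induction i with
  | zero =>
    intro ga hga
    obtain ⟨sa, ⟨a, haD, rfl⟩, rfl⟩ := hga
    exact Set.mem_iUnion.2 ⟨0, ⟨a, haD, rfl⟩⟩
  | succ i ih =>
    intro ga hga
    rcases hga with hga | hga
    · exact ih ga hga
    obtain ⟨τ, hτ, h, hhom, hres⟩ := hga
    obtain ⟨σ, hσ, hmem⟩ := Set.mem_iUnion₂.1 hτ
    obtain ⟨a, f, hbody, hf, rfl⟩ := hmem
    obtain ⟨b, hb, rfl⟩ := hres
    have hba : ((a.map f).simple).map h ∈ chaseN (Atom.simple '' D) (simplify Sgm) i :=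
      hhom _ (by simp [TGD.simplifyBy])
    have hk := Set.mem_iUnion.1 (ih _ hba)
    obtain ⟨k, hk⟩ := hk
    obtain ⟨bb, hbb, rfl⟩ := List.mem_map.1 hb
    refine Set.mem_iUnion.2 ⟨k + 1, Or.inr ⟨?_, σ, hσ, a, f,
      fun v => idOf (a.args.map f) (f v), hbody, isHom_idOf_db a f hk,
      isHSpec_idOf a f hf, _, List.mem_map_of_mem hbb, rfl⟩⟩
    exact ⟨(bb.pred, bb.args.length), ⟨σ, hσ, bb, Or.inr hbb, rfl, rfl⟩,
      bb.args.map _, by simp, rfl⟩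

lemma chaseN_mono_rules {Q : Type} (D' : Set (Atom Q ℕ)) {S1 S2 : Set (TGD Q)}
    (hS : S1 ⊆ S2) : ∀ i, chaseN D' S1 i ⊆ chaseN D' S2 i := by
  intro i
  induction i with
  | zero => exact fun _ h => h
  | succ i ih =>
    rintro ga (hga | ⟨τ, hτ, h, hhom, hres⟩)
    · exact Or.inl (ih hga)
    · exact Or.inr ⟨τ, hS hτ, h, fun b hb => ih (hhom b hb), hres⟩

lemma dyn_subset_simplify (D : Set (Atom P ℕ)) (Sgm : Set (TGD P)) :
    dynSimplify D Sgm ⊆ simplify Sgm := by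
  rintro τ ⟨σ, hσ, a, f, h, hbody, _, ⟨hspec, _⟩, rfl⟩
  exact Set.mem_iUnion₂.2 ⟨σ, hσ, a, f, hbody, hspec, rfl⟩

lemma chaseN_simplify_subset_dyn (D : Set (Atom P ℕ)) (Sgm : Set (TGD P)) :
    ∀ i, chaseN (Atom.simple '' D) (simplify Sgm) i ⊆
      chaseN (Atom.simple '' D) (dynSimplify D Sgm) i := by
  intro i
  induction i with
  | zero => exact fun _ h => h
  | succ i ih =>
    rintro ga (hga | ⟨τ, hτ, h, hhom, hres⟩)
    · exact Or.inl (ih hga)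
    · refine Or.inr ⟨τ, ?_, h, fun b hb => ih (hhom b hb), hres⟩
      obtain ⟨σ, hσ, hmem⟩ := Set.mem_iUnion₂.1 hτ
      obtain ⟨a, f, hbody, hf, rfl⟩ := hmem
      apply simplify_mem_dyn D Sgm hσ hbody hf
      have hba : ((a.map f).simple).map h ∈ chaseN (Atom.simple '' D) (simplify Sgm) i :=
        hhom _ (by simp [TGD.simplifyBy])
      exact chase_pred_mem_closure D Sgm i _ hba

end Main
/-- For a database `D` and a set `Σ` of linear TGDs (with
non-empty frontiers) whose atoms of `D` mention only predicates of `sch(Σ)`,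
`chase(simple(D), simple(Σ))` is finite iff `chase(simple(D), simple_D(Σ))` is
finite. -/
theorem statement5 {P : Type} (D : Set (Atom P ℕ)) (Sgm : Set (TGD P))
    (hD : D.Finite) (hSgm : Sgm.Finite)
    (hlin : ∀ σ ∈ Sgm, σ.Linear)
    (hfr : ∀ σ ∈ Sgm, σ.frontier.Nonempty)
    (hsch : ∀ a ∈ D, (a.pred, a.args.length) ∈ schPreds Sgm) :
    (chase (Atom.simple '' D) (simplify Sgm)).Finite ↔
      (chase (Atom.simple '' D) (dynSimplify D Sgm)).Finite := by
  have key : chase (Atom.simple '' D) (simplify Sgm) =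
      chase (Atom.simple '' D) (dynSimplify D Sgm) := by
    apply Set.Subset.antisymm
    · exact Set.iUnion_mono fun i => chaseN_simplify_subset_dyn D Sgm i
    · exact Set.iUnion_mono fun i => chaseN_mono_rules _ (dyn_subset_simplify D Sgm) i
  rw [key]
end

section
/- Let D be a database and Σ a set of linear TGDs (with non-empty frontiers) such that the atoms of D mention only predicates of sch(Σ). If (R1,i1),...,(Rn,in) is a path in the dependency graph of simple(Σ) such that some atom of the form R1(c̄) belongs to simple(D), then {R1,...,Rn} ⊆ Σ(shape(D)). -/
/-! ### Auxiliary lemmas -/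

lemma indexOf_le_of_getElem {l : List ℕ} {k u : ℕ} (hk : k < l.length) (h : l[k] = u) :
    l.idxOf u ≤ k := by
  by_contra hc
  push_neg at hc
  have := List.not_of_lt_findIdx (p := (· == u)) (xs := l) (i := k) hc
  simp [h] at this

lemma idOf_lt_idOf {l : List ℕ} {u v : ℕ} (hu : u ∈ l) (hv : v ∈ l)
    (hlt : l.idxOf u < l.idxOf v) : idOf l u < idOf l v := by
  set i := l.idxOf u with hi
  set j := l.idxOf v with hj
  have hjl : j < l.length := List.idxOf_lt_length_iff.2 hv
  have hsub : l.take i ⊆ l.take j := by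
    intro x hx
    have : l.take i = (l.take j).take i := by
      rw [List.take_take, min_eq_left hlt.le]
    rw [this] at hx
    exact List.take_subset _ _ hx
  have humem : u ∈ l.take j := by
    have h1 : i < (l.take j).length := by simp [List.length_take]; omega
    have h2 : (l.take j)[i] = u := by
      rw [List.getElem_take]
      exact List.getElem_idxOf (List.idxOf_lt_length_iff.2 hu)
    exact h2 ▸ List.getElem_mem h1
  have hunot : u ∉ l.take i := by
    intro hmem
    obtain ⟨k, hk, hku⟩ := List.getElem_of_mem hmem
    have hki : k < i := lt_of_lt_of_le hk (by simp [List.length_take])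
    have hkl : k < l.length := by omega
    have hlu : l[k] = u := by
      rw [← List.getElem_take (xs := l) (j := i) (h := hk)]; exact hku
    have := indexOf_le_of_getElem hkl hlu
    omega
  have hss : (l.take i).toFinset ⊂ (l.take j).toFinset := by
    constructor
    · intro x hx
      simp only [List.mem_toFinset] at *
      exact hsub hx
    · intro hcon
      exact hunot (List.mem_toFinset.1 (hcon (List.mem_toFinset.2 humem)))
  have hcard := Finset.card_lt_card hss
  rw [List.card_toFinset, List.card_toFinset] at hcard
  simp only [idOf, ← hi, ← hj]
  omega

lemma idOf_inj {l : List ℕ} {u v : ℕ} (hu : u ∈ l) (hv : v ∈ l)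
    (h : idOf l u = idOf l v) : u = v := by
  rcases lt_trichotomy (l.idxOf u) (l.idxOf v) with hlt | heq | hgt
  · exact absurd h (ne_of_lt (idOf_lt_idOf hu hv hlt))
  · have h1 := List.getElem_idxOf (List.idxOf_lt_length_iff.2 hu)
    have h2 := List.getElem_idxOf (List.idxOf_lt_length_iff.2 hv)
    rw [← h1, ← h2]
    congr 1
  · exact absurd h.symm (ne_of_lt (idOf_lt_idOf hv hu hgt))

lemma shape_mem_shapesOf {P : Type} {Sgm : Set (TGD P)} {σ : TGD P} (hσ : σ ∈ Sgm)
    {b0 : Atom P ℕ} (hb0 : b0 ∈ σ.head) (g : ℕ → ℕ) :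
    (b0.pred, idTuple (b0.args.map g)) ∈ shapesOf Sgm := by
  refine ⟨(b0.pred, b0.args.length), ⟨σ, hσ, b0, Or.inr hb0, rfl, rfl⟩,
    b0.args.map g, by simp, rfl⟩

/-- the key step: an edge of `dg(simple Σ)` propagates membership through `ImmCons`. -/
lemma step_lemma {P : Type} (Sgm : Set (TGD P)) (S : Set (P × List ℕ))
    {π π' : (P × List ℕ) × ℕ} (hπ : π.1 ∈ S)
    (hedge : depEdge (simplify Sgm) π π') : π'.1 ∈ ImmCons Sgm S := by
  -- extract a common core from the two kinds of edges
  have hcore : ∃ τ ∈ simplify Sgm, (∃ x, bodyPosOf τ x π) ∧ (∃ y, headPosOf τ y π') := by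
    rcases hedge with ⟨τ, hτ, x, _, hb, hh⟩ | ⟨τ, hτ, ⟨x, _, hb⟩, y, _, hh⟩
    · exact ⟨τ, hτ, ⟨x, hb⟩, ⟨x, hh⟩⟩
    · exact ⟨τ, hτ, ⟨x, hb⟩, ⟨y, hh⟩⟩
  obtain ⟨τ, hτ, ⟨x, hb⟩, ⟨y, hh⟩⟩ := hcore
  simp only [simplify, Set.mem_iUnion] at hτ
  obtain ⟨σ, hσ, a, f, hbody, hspec, rfl⟩ := hτ
  -- identify π.1
  obtain ⟨ab, habmem, habpred, -⟩ := hb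
  have habeq : ab = (a.map f).simple := by
    simpa [TGD.simplifyBy] using habmem
  have hπ1 : π.1 = (a.pred, idTuple (a.args.map f)) := by
    rw [← habpred, habeq]; rfl
  -- identify π'.1
  obtain ⟨bh, hbhmem, hbhpred, -⟩ := hh
  -- the homomorphism
  set l := a.args.map f with hl
  refine Or.inr ⟨?_, σ, hσ, a, f, (fun v => idOf l (f v)), hbody, ?_, ⟨?_, ?_⟩,
    bh, hbhmem, hbhpred⟩
  · -- π'.1 ∈ shapesOf Sgm
    rw [← hbhpred]
    simp only [TGD.simplifyBy, List.mem_map] at hbhmem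
    obtain ⟨b0, hb0, rfl⟩ := hbhmem
    exact shape_mem_shapesOf hσ hb0 _
  · -- IsHom
    intro c hc
    have hc' : c = a := by simpa using hc
    rw [hc']
    show ((Atom.map (fun v => idOf l (f v)) a).pred, (Atom.map (fun v => idOf l (f v)) a).args) ∈ S
    have harg : (Atom.map (fun v => idOf l (f v)) a).args = idTuple l := by
      simp [Atom.map, idTuple, hl, Function.comp]
    rw [harg]
    show (a.pred, idTuple l) ∈ S
    rw [← hπ1]; exact hπ
  · exact hspec
  · -- f x = f y ↔ h x = h y
    intro u hu v hv
    constructor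
    · intro h; simp [h]
    · intro h
      exact idOf_inj (hl ▸ List.mem_map_of_mem (f := f) hu) (hl ▸ List.mem_map_of_mem (f := f) hv) h

lemma gammaIter_subset_closure {P : Type} (Sgm : Set (TGD P)) (S : Set (P × List ℕ))
    (i : ℕ) : GammaIter Sgm S i ⊆ SigmaClosure Sgm S :=
  Set.subset_iUnion (GammaIter Sgm S) i

lemma closure_step {P : Type} (Sgm : Set (TGD P)) (S : Set (P × List ℕ))
    {π π' : (P × List ℕ) × ℕ} (hπ : π.1 ∈ SigmaClosure Sgm S)
    (hedge : depEdge (simplify Sgm) π π') : π'.1 ∈ SigmaClosure Sgm S := by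
  obtain ⟨_, ⟨i, rfl⟩, hi⟩ := hπ
  exact gammaIter_subset_closure Sgm S (i + 1) (step_lemma Sgm _ hi hedge)

lemma chain_all {α : Type*} {E : α → α → Prop} {C : α → Prop}
    (hclosed : ∀ x y, C x → E x y → C y) :
    ∀ (p : α) (l : List α), List.Chain' E (p :: l) → C p → ∀ q ∈ p :: l, C q := by
  intro p l
  induction l generalizing p with
  | nil => intro _ hp q hq; simp at hq; subst hq; exact hp
  | cons b t ih =>
    intro hchain hp q hq
    rw [List.Chain', List.isChain_cons_cons] at hchain
    rcases List.mem_cons.1 hq with rfl | hq'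
    · exact hp
    · exact ih b hchain.2 (hclosed p b hp hchain.1) q hq'

/-- If `(R1,i1),...,(Rn,in)` is a path in the dependency graph
of `simple(Σ)` such that some atom `R1(c̄)` belongs to `simple(D)`, then
`{R1,...,Rn} ⊆ Σ(shape(D))`. -/
theorem statement6 {P : Type} (D : Set (Atom P ℕ)) (Sgm : Set (TGD P))
    (hD : D.Finite) (hSgm : Sgm.Finite)
    (hlin : ∀ σ ∈ Sgm, σ.Linear)
    (hfr : ∀ σ ∈ Sgm, σ.frontier.Nonempty)
    (hsch : ∀ a ∈ D, (a.pred, a.args.length) ∈ schPreds Sgm)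
    (π₀ : (P × List ℕ) × ℕ) (l : List ((P × List ℕ) × ℕ))
    (hwalk : List.Chain' (depEdge (simplify Sgm)) (π₀ :: l))
    (hstart : ∃ a ∈ D, (Atom.simple a).pred = π₀.1) :
    ∀ π ∈ π₀ :: l, π.1 ∈ SigmaClosure Sgm (Atom.shape '' D) := by
  obtain ⟨a, ha, hpred⟩ := hstart
  have hbase : π₀.1 ∈ SigmaClosure Sgm (Atom.shape '' D) := by
    apply gammaIter_subset_closure Sgm _ 0
    show π₀.1 ∈ Atom.shape '' D
    exact ⟨a, ha, by rw [← hpred]; rfl⟩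
  exact chain_all (fun x y hx he => closure_step Sgm _ hx he) π₀ l hwalk hbase
end

section
/- Let a and b be distinct constants, D = {R(a,b)} for a binary predicate R, and Σ the singleton set consisting of the linear (non-simple) TGD R(x,x) → ∃z R(z,x). Then there is no trigger for Σ on D, so chase(D,Σ) = D is finite; yet Σ is not D-weakly-acyclic. In particular, the equivalence between finiteness of the semi-oblivious chase and D-weak-acyclicity fails for linear TGDs that are not simple-linear. -/
/-- The non-simple linear TGD `R(x,x) → ∃z R(z,x)` over a single binary
predicate (variables: `x = 0`, `z = 1`). -/
def tgd15 : TGD Unit :=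
  ⟨[⟨(), [0, 0]⟩], [⟨(), [1, 0]⟩], List.cons_ne_nil _ _, List.cons_ne_nil _ _⟩


/-! The body `R(x,x)` can only be matched by a fact with a repeated constant, which `R(a,b)` is
not, so no trigger ever fires and the chase stops at `D`. The dependency graph, however, forgets
that `x` is repeated: `x` occurs at `(R,0)` in the body and `z` at `(R,0)` in the head, giving a
special self-loop at a position of the predicate of `D`. -/

section Chase

variable {P : Type} (D : Set (Atom P ℕ)) (Sgm : Set (TGD P))

theorem dbInst_eq_image : dbInst D = Atom.map GTerm.const '' D := by
  ext ga
  simp only [dbInst, Set.mem_ofPred_eq, Set.mem_image, eq_comm]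

theorem Set.Finite.dbInst (hD : D.Finite) : (dbInst D).Finite := by
  rw [dbInst_eq_image]
  exact hD.image _

variable {D Sgm}

theorem chaseN_eq_dbInst_of_no_trigger
    (hno : ¬ ∃ σ ∈ Sgm, ∃ h : ℕ → GTerm P, IsHom h σ.body (dbInst D)) (n : ℕ) :
    chaseN D Sgm n = dbInst D := by
  induction n with
  | zero => rfl
  | succ n ih =>
    rw [chaseN, ih, Set.union_eq_self_of_subset_right]
    rintro ga ⟨σ, hσ, h, hh, -⟩
    exact (hno ⟨σ, hσ, h, ih ▸ hh⟩).elim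

theorem chase_eq_dbInst_of_no_trigger
    (hno : ¬ ∃ σ ∈ Sgm, ∃ h : ℕ → GTerm P, IsHom h σ.body (dbInst D)) :
    chase D Sgm = dbInst D := by
  simp only [chase, chaseN_eq_dbInst_of_no_trigger hno, Set.iUnion_const]

end Chase

section DependencyGraph

variable {P : Type} {Sgm : Set (TGD P)}

theorem isCycleWithSpecial_of_specialEdge_self {π : P × ℕ} (h : specialEdge Sgm π π) :
    IsCycleWithSpecial Sgm [π, π] :=
  ⟨le_rfl, List.isChain_pair.2 (Or.inr h), rfl, 0, π, π, rfl, rfl, h⟩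

theorem not_dWeaklyAcyclic_of_specialEdge_self {D : Set (Atom P ℕ)} {π : P × ℕ}
    (h : specialEdge Sgm π π) {a : Atom P ℕ} (ha : a ∈ D) (hpred : a.pred = π.1) :
    ¬ DWeaklyAcyclic D Sgm :=
  not_not_intro ⟨[π, π], isCycleWithSpecial_of_specialEdge_self h,
    a, ha, π, List.mem_cons_self, Or.inl hpred⟩

end DependencyGraph

theorem eq_of_isHom_tgd15_body {a b : ℕ} {h : ℕ → GTerm Unit}
    (hh : IsHom h tgd15.body (dbInst {⟨(), [a, b]⟩})) : a = b := by
  obtain ⟨_, rfl, heq⟩ := hh ⟨(), [0, 0]⟩ List.mem_cons_self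
  simp only [Atom.map, List.map_cons, List.map_nil, Atom.mk.injEq, List.cons.injEq,
    and_true, true_and] at heq
  exact GTerm.const.inj (heq.1.symm.trans heq.2)

theorem zero_mem_frontier_tgd15 : (0 : ℕ) ∈ tgd15.frontier :=
  ⟨⟨_, List.mem_cons_self, List.mem_cons_self⟩, ⟨_, List.mem_cons_self, by simp⟩⟩

theorem one_mem_existVars_tgd15 : (1 : ℕ) ∈ tgd15.existVars := by
  refine ⟨⟨_, List.mem_cons_self, List.mem_cons_self⟩, ?_⟩
  rintro ⟨_, hat, hmem⟩
  simp only [tgd15, List.mem_cons, List.not_mem_nil, or_false] at hat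
  simp [hat] at hmem

theorem specialEdge_tgd15 : specialEdge {tgd15} ((), 0) ((), 0) :=
  ⟨tgd15, rfl, ⟨0, zero_mem_frontier_tgd15, _, List.mem_cons_self, rfl, rfl⟩,
    ⟨1, one_mem_existVars_tgd15, _, List.mem_cons_self, rfl, rfl⟩⟩

/-- For distinct constants `a, b`, with `D = {R(a,b)}` and
`Σ = {R(x,x) → ∃z R(z,x)}`: there is no trigger for `Σ` on `D`, so
`chase(D,Σ) = D` is finite, yet `Σ` is not `D`-weakly-acyclic.  In particular,
the equivalence between finiteness of the semi-oblivious chase and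
`D`-weak-acyclicity fails for linear TGDs that are not simple-linear. -/
theorem statement15 (a b : ℕ) (hab : a ≠ b) :
    (¬ ∃ σ ∈ ({tgd15} : Set (TGD Unit)), ∃ h : ℕ → GTerm Unit,
        IsHom h σ.body (dbInst ({⟨(), [a, b]⟩} : Set (Atom Unit ℕ)))) ∧
      chase ({⟨(), [a, b]⟩} : Set (Atom Unit ℕ)) ({tgd15} : Set (TGD Unit)) =
        dbInst ({⟨(), [a, b]⟩} : Set (Atom Unit ℕ)) ∧
      (chase ({⟨(), [a, b]⟩} : Set (Atom Unit ℕ))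
        ({tgd15} : Set (TGD Unit))).Finite ∧
      ¬ DWeaklyAcyclic ({⟨(), [a, b]⟩} : Set (Atom Unit ℕ))
        ({tgd15} : Set (TGD Unit)) := by
  have hno : ¬ ∃ σ ∈ ({tgd15} : Set (TGD Unit)), ∃ h : ℕ → GTerm Unit,
      IsHom h σ.body (dbInst ({⟨(), [a, b]⟩} : Set (Atom Unit ℕ))) := by
    rintro ⟨σ, rfl, h, hh⟩
    exact hab (eq_of_isHom_tgd15_body hh)
  have hchase := chase_eq_dbInst_of_no_trigger hno
  refine ⟨hno, hchase, ?_, ?_⟩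
  · rw [hchase]
    exact (Set.finite_singleton _).dbInst
  · exact not_dWeaklyAcyclic_of_specialEdge_self specialEdge_tgd15 rfl rfl
end
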